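/- arXiv:2512.23337 — 6 statements merged into one kernel-verified Lean document; each statement's English description precedes it below -/
import Mathlib

section
/- Let n ≥ 2, φ > 0, and let G be a simple undirected graph on n vertices with adjacency matrix entries G_ij ∈ {0,1}, degrees d_i ∈ {0,...,n−1}, and productivities θ_i ∈ (0,1]. Define the matrix A by A_ii = (n+1)²φ/(θ_i(n−d_i)) − θ_i(n−d_i) and, for j ≠ i, A_ij = (1+d_j)θ_j − (n+1)G_ij θ_j. If φ > n[(n−1)² + n]/(n+1)², then for every row i, |A_ii| > Σ_{j≠i} |A_ij|, and hence A is nonsingular. -/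
/-!
Every off-diagonal entry of a row has absolute value at most `n - 1`: if `G i j = 0` then `j`
misses both itself and `i`, so `(1 + d j) θ j ≤ n - 1`; if `G i j = 1` the entry is
`-(n - d j) θ j` with `d j ≥ 1`. A row thus contributes at most `(n - 1)²`, while with
`s = θ i (n - d i) ∈ (0, n]` the diagonal entry `(n + 1)² φ / s - s` exceeds `(n - 1)² + n - s`
by the hypothesis on `φ`. Nonsingularity is the Levy–Desplanques theorem.
-/

open Finset

section Degree

variable {ι : Type*} [Fintype ι] {G : Matrix ι ι ℝ}

theorem one_le_sum_row_of_eq_one (hG01 : ∀ i j, G i j = 0 ∨ G i j = 1) {i j : ι}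
    (h : G j i = 1) : 1 ≤ ∑ k, G j k :=
  h ▸ single_le_sum (fun k _ ↦ by rcases hG01 j k with h | h <;> simp [h]) (mem_univ i)

theorem sum_row_nonneg (hG01 : ∀ i j, G i j = 0 ∨ G i j = 1) (j : ι) : 0 ≤ ∑ k, G j k :=
  sum_nonneg fun k _ ↦ by rcases hG01 j k with h | h <;> simp [h]

variable [DecidableEq ι]

theorem sum_erase_le_card_sub_one_mul {f : ι → ℝ} {c : ℝ} (i : ι) (hf : ∀ j ≠ i, f j ≤ c) :
    ∑ j ∈ univ.erase i, f j ≤ (Fintype.card ι - 1) * c := by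
  calc ∑ j ∈ univ.erase i, f j ≤ #(univ.erase i) • c :=
        sum_le_card_nsmul _ _ _ fun j hj ↦ hf j (ne_of_mem_erase hj)
    _ = (Fintype.card ι - 1) * c := by
        rw [card_erase_of_mem (mem_univ i), card_univ, nsmul_eq_mul,
          Nat.cast_sub (Fintype.card_pos_iff.2 ⟨i⟩), Nat.cast_one]

theorem sum_le_card_sub_card_of_le_one {f : ι → ℝ} (hf : ∀ k, f k ≤ 1) {s : Finset ι}
    (hs : ∀ k ∈ s, f k = 0) : ∑ k, f k ≤ Fintype.card ι - #s := by
  rw [← sum_compl_add_sum s, sum_eq_zero hs, add_zero]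
  calc ∑ k ∈ sᶜ, f k ≤ ∑ _k ∈ sᶜ, (1 : ℝ) := sum_le_sum fun k _ ↦ hf k
    _ = Fintype.card ι - #s := by
      rw [sum_const, card_compl, nsmul_one, Nat.cast_sub (card_le_univ s)]

theorem sum_row_le_card_sub_one (hG01 : ∀ i j, G i j = 0 ∨ G i j = 1)
    (hGdiag : ∀ i, G i i = 0) (j : ι) : ∑ k, G j k ≤ Fintype.card ι - 1 := by
  simpa using sum_le_card_sub_card_of_le_one (s := {j})
    (fun k ↦ by rcases hG01 j k with h | h <;> simp [h]) (by simpa using hGdiag j)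

theorem sum_row_le_card_sub_two_of_eq_zero (hG01 : ∀ i j, G i j = 0 ∨ G i j = 1)
    (hGdiag : ∀ i, G i i = 0) {i j : ι} (hij : i ≠ j) (h : G j i = 0) :
    ∑ k, G j k ≤ Fintype.card ι - 2 := by
  simpa [card_pair hij] using sum_le_card_sub_card_of_le_one (s := {i, j})
    (fun k ↦ by rcases hG01 j k with h | h <;> simp [h]) (by simp [h, hGdiag j])

theorem abs_offDiag_le (hG01 : ∀ i j, G i j = 0 ∨ G i j = 1)
    (hGsymm : ∀ i j, G i j = G j i) (hGdiag : ∀ i, G i i = 0) {θ : ι → ℝ}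
    (hθ : ∀ i, θ i ∈ Set.Ioc (0 : ℝ) 1) {i j : ι} (hij : i ≠ j) :
    |(1 + ∑ k, G j k) * θ j - ((Fintype.card ι : ℝ) + 1) * G i j * θ j|
      ≤ Fintype.card ι - 1 := by
  obtain ⟨hθ0, hθ1⟩ := hθ j
  have hdle := sum_row_le_card_sub_one hG01 hGdiag j
  rcases hG01 i j with h | h
  · have hd0 := sum_row_nonneg hG01 j
    have hd := sum_row_le_card_sub_two_of_eq_zero hG01 hGdiag hij (hGsymm i j ▸ h)
    rw [h, mul_zero, zero_mul, sub_zero, abs_of_nonneg (by positivity)]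
    nlinarith
  · have hd := one_le_sum_row_of_eq_one hG01 (hGsymm i j ▸ h)
    rw [h, abs_le]
    constructor <;> nlinarith

end Degree

theorem sub_one_sq_lt_diag {n φ s : ℝ} (hs0 : 0 < s) (hsn : s ≤ n)
    (hφ : φ > n * ((n - 1) ^ 2 + n) / (n + 1) ^ 2) :
    (n - 1) ^ 2 < (n + 1) ^ 2 * φ / s - s := by
  have hφ' : n * ((n - 1) ^ 2 + n) < (n + 1) ^ 2 * φ :=
    (div_lt_iff₀' (by nlinarith)).1 hφ
  have : ((n - 1) ^ 2 + s) * s < (n + 1) ^ 2 * φ := by nlinarith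
  rw [lt_sub_iff_add_lt, lt_div_iff₀ hs0]
  linarith

theorem stmt1_general (n : ℕ) (φ : ℝ)
    (G : Matrix (Fin n) (Fin n) ℝ)
    (hG01 : ∀ i j, G i j = 0 ∨ G i j = 1)
    (hGsymm : ∀ i j, G i j = G j i) (hGdiag : ∀ i, G i i = 0)
    (θ : Fin n → ℝ) (hθ : ∀ i, θ i ∈ Set.Ioc (0:ℝ) 1)
    (d : Fin n → ℝ) (hd : ∀ i, d i = ∑ j, G i j)
    (A : Matrix (Fin n) (Fin n) ℝ)
    (hA : ∀ i j, A i j =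
      if i = j then ((n:ℝ)+1)^2 * φ / (θ i * ((n:ℝ) - d i)) - θ i * ((n:ℝ) - d i)
      else (1 + d j) * θ j - ((n:ℝ)+1) * G i j * θ j)
    (hφ : φ > (n:ℝ) * (((n:ℝ)-1)^2 + (n:ℝ)) / ((n:ℝ)+1)^2) :
    (∀ i, ∑ j ∈ Finset.univ.erase i, |A i j| < |A i i|) ∧ A.det ≠ 0 := by
  have hdom : ∀ i, ∑ j ∈ univ.erase i, |A i j| < |A i i| := by
    intro i
    have hrow : ∑ j ∈ univ.erase i, |A i j| ≤ ((n : ℝ) - 1) * (n - 1) := by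
      simpa using sum_erase_le_card_sub_one_mul i fun j hji ↦ by
        simpa [hA, hji.symm, hd] using abs_offDiag_le hG01 hGsymm hGdiag hθ hji.symm
    obtain ⟨hθ0, hθ1⟩ := hθ i
    have hdle : d i ≤ n - 1 := by simpa [hd] using sum_row_le_card_sub_one hG01 hGdiag i
    have hd0 : 0 ≤ d i := hd i ▸ sum_row_nonneg hG01 i
    have hdiag := sub_one_sq_lt_diag (s := θ i * (n - d i)) (by nlinarith) (by nlinarith) hφ
    rw [hA, if_pos rfl, abs_of_pos (by nlinarith)]
    linarith
  exact ⟨hdom, det_ne_zero_of_sum_row_lt_diag fun k ↦ by simpa using hdom k⟩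

theorem stmt1 (n : ℕ) (hn : 2 ≤ n) (φ : ℝ) (hφ0 : 0 < φ)
    (G : Matrix (Fin n) (Fin n) ℝ)
    (hG01 : ∀ i j, G i j = 0 ∨ G i j = 1)
    (hGsymm : ∀ i j, G i j = G j i) (hGdiag : ∀ i, G i i = 0)
    (θ : Fin n → ℝ) (hθ : ∀ i, θ i ∈ Set.Ioc (0:ℝ) 1)
    (d : Fin n → ℝ) (hd : ∀ i, d i = ∑ j, G i j)
    (A : Matrix (Fin n) (Fin n) ℝ)
    (hA : ∀ i j, A i j =
      if i = j then ((n:ℝ)+1)^2 * φ / (θ i * ((n:ℝ) - d i)) - θ i * ((n:ℝ) - d i)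
      else (1 + d j) * θ j - ((n:ℝ)+1) * G i j * θ j)
    (hφ : φ > (n:ℝ) * (((n:ℝ)-1)^2 + (n:ℝ)) / ((n:ℝ)+1)^2) :
    (∀ i, ∑ j ∈ Finset.univ.erase i, |A i j| < |A i i|) ∧ A.det ≠ 0 :=
  stmt1_general n φ G hG01 hGsymm hGdiag θ hθ d hd A hA hφ
end

section
/- Let n ≥ 2, φ ≥ 1, η ∈ [2/(n+1), n/(n+1)], and θ_i, θ_j ∈ (0,1] with θ_i > θ_j. Then the quantity R := [(φ − θ_i²η²)/(φ − θ_j²η²)] · [(φ − θ_j²η)/(φ − θ_i²η)]² satisfies R > 1. -/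
set_option maxHeartbeats 1000000


theorem stmt7 (n : ℕ) (hn : 2 ≤ n) (φ η θi θj : ℝ) (hφ : 1 ≤ φ)
    (hη : η ∈ Set.Icc (2/((n:ℝ)+1)) ((n:ℝ)/((n:ℝ)+1)))
    (hθi : θi ∈ Set.Ioc (0:ℝ) 1) (hθj : θj ∈ Set.Ioc (0:ℝ) 1)
    (hθ : θj < θi) :
    1 < ((φ - θi^2 * η^2) / (φ - θj^2 * η^2))
        * ((φ - θj^2 * η) / (φ - θi^2 * η))^2 := by
  obtain ⟨hη1, hη2⟩ := hη
  obtain ⟨hi0, hi1⟩ := hθi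
  obtain ⟨hj0, hj1⟩ := hθj
  have hn1 : (1:ℝ) ≤ (n:ℝ) := by exact_mod_cast Nat.one_le_of_lt hn
  have hηpos : 0 < η := lt_of_lt_of_le (by positivity) hη1
  have hηlt : η < 1 := lt_of_le_of_lt hη2 (by
    rw [div_lt_one (by linarith)]; linarith)
  have hs : θi^2 ≤ 1 := by nlinarith [sq_nonneg (θi - 1)]
  have ht : θj^2 ≤ 1 := by nlinarith [sq_nonneg (θj - 1)]
  have hs0 : 0 < θi^2 := by positivity
  have ht0 : 0 < θj^2 := by positivity
  -- denominators positive
  have hBi : 0 < φ - θi^2 * η := by nlinarith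
  have hBj : 0 < φ - θj^2 * η := by nlinarith
  have hAi : 0 < φ - θi^2 * η^2 := by nlinarith
  have hAj : 0 < φ - θj^2 * η^2 := by nlinarith
  -- key bracket
  have h1 : 0 ≤ (1 - θi^2) * (1 - η^2) * η := by
    apply mul_nonneg (mul_nonneg (by linarith) (by nlinarith)) hηpos.le
  have h2 : 0 ≤ (1 - θj^2) * (1 - η^2) * η := by
    apply mul_nonneg (mul_nonneg (by linarith) (by nlinarith)) hηpos.le
  have h3 : 0 ≤ (1 - θi^2) * (1 - θj^2) * η^3 := by
    apply mul_nonneg (mul_nonneg (by linarith) (by linarith)) (by positivity)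
  have h4 : 0 < (1 - η)^2 * (η + 2) :=
    mul_pos (pow_pos (by linarith) 2) (by linarith)
  have hxi : θi^2 * η ≤ η := mul_le_of_le_one_left hηpos.le hs
  have hxj : θj^2 * η ≤ η := mul_le_of_le_one_left hηpos.le ht
  have h5 : 0 ≤ (φ - 1) * ((φ + 1) * (2 - η) - (θi^2 * η + θj^2 * η)) := by
    apply mul_nonneg (by linarith)
    have h6 : 2 * (2 - η) ≤ (φ + 1) * (2 - η) :=
      mul_le_mul_of_nonneg_right (by linarith) (by linarith)
    linarith
  have hbr : 0 < φ^2 * (2 - η) - φ * (θi^2*η + θj^2*η) + (θi^2*η)*(θj^2*η)*η := by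
    linarith [h1, h2, h3, h4, h5]
  have hkey : (φ - θj^2 * η^2) * (φ - θi^2 * η)^2
      < (φ - θi^2 * η^2) * (φ - θj^2 * η)^2 := by
    have hx : 0 < (θi^2 - θj^2) * η := by
      apply mul_pos _ hηpos
      have := mul_pos (sub_pos.2 hθ) (show (0:ℝ) < θi + θj by linarith)
      linarith [this]
    linarith [mul_pos hx hbr]
  rw [div_pow, div_mul_div_comm, one_lt_div (by positivity)]
  linarith [hkey]
end

section
/- Let n ≥ 2, φ ≥ 1, η ∈ (0, 1), and θ_i, θ_j ∈ (0,1] with θ_i > θ_j. For unconnected symmetric firms the equilibrium effort ratio is e_i*/e_j* = (θ_i/θ_j)·(φ − θ_j²η)/(φ − θ_i²η). Then e_i*/e_j* > θ_i/θ_j > 1; in particular the more productive firm exerts strictly more effort, and its relative effort is strictly larger than when the two firms are connected (where the ratio equals θ_i/θ_j exactly). -/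
theorem stmt8 (n : ℕ) (hn : 2 ≤ n) (φ η θi θj ei ej : ℝ) (hφ : 1 ≤ φ)
    (hη : η ∈ Set.Ioo (0:ℝ) 1)
    (hθi : θi ∈ Set.Ioc (0:ℝ) 1) (hθj : θj ∈ Set.Ioc (0:ℝ) 1)
    (hθ : θj < θi)
    (hratio : ei / ej = (θi / θj) * ((φ - θj^2 * η) / (φ - θi^2 * η))) :
    θi / θj < ei / ej ∧ 1 < θi / θj := by
  obtain ⟨hη0, hη1⟩ := hη
  obtain ⟨hθi0, hθi1⟩ := hθi
  obtain ⟨hθj0, hθj1⟩ := hθj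
  have hi1 : θi^2 ≤ 1 := by nlinarith
  have hj1 : θj^2 ≤ 1 := by nlinarith
  have hiη : θi^2 * η < φ := by nlinarith
  have hjη : θj^2 * η < φ := by nlinarith
  have hlt : θi^2 * η > θj^2 * η := by nlinarith [mul_pos (sub_pos.2 hθ) (add_pos hθi0 hθj0)]
  have hr : 1 < θi / θj := (one_lt_div hθj0).2 hθ
  refine ⟨?_, hr⟩
  rw [hratio]
  have hfrac : 1 < (φ - θj^2 * η) / (φ - θi^2 * η) := by
    rw [one_lt_div (by linarith)]; linarith
  nlinarith [mul_lt_mul_of_pos_left hfrac (lt_trans one_pos hr)]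
end

section
/- Let n ≥ 2, θ_1,...,θ_n ∈ (0,1], and φ > n[(n−1)²+n]/(n+1)², and let α > c̄. Define e_i := (α − c̄)θ_i / [(n+1)²φ − Σ_{j=1}^n θ_j²] for each i. Then (e_1,...,e_n) solves the system of first-order conditions for the complete network: for each i, [(n+1)²φ/θ_i − θ_i]·e_i = (α − c̄) + Σ_{j≠i} θ_j e_j; moreover each e_i > 0. -/
theorem stmt9 (n : ℕ) (hn : 2 ≤ n) (φ α cbar : ℝ)
    (θ : Fin n → ℝ) (hθ : ∀ i, θ i ∈ Set.Ioc (0:ℝ) 1)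
    (hφ : φ > (n:ℝ) * (((n:ℝ)-1)^2 + (n:ℝ)) / ((n:ℝ)+1)^2)
    (hα : cbar < α)
    (e : Fin n → ℝ)
    (he : ∀ i, e i = (α - cbar) * θ i / (((n:ℝ)+1)^2 * φ - ∑ j, (θ j)^2)) :
    ∀ i, (((n:ℝ)+1)^2 * φ / θ i - θ i) * e i
        = (α - cbar) + ∑ j ∈ Finset.univ.erase i, θ j * e j ∧ 0 < e i := by
  have hn2 : (2:ℝ) ≤ (n:ℝ) := by exact_mod_cast hn
  have hn1 : (0:ℝ) < ((n:ℝ)+1)^2 := by positivity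
  have hphi : (n:ℝ) * (((n:ℝ)-1)^2 + (n:ℝ)) < ((n:ℝ)+1)^2 * φ := by
    have := (div_lt_iff₀ hn1).mp hφ
    linarith
  have hsum_le : ∑ j, (θ j)^2 ≤ (n:ℝ) := by
    calc ∑ j, (θ j)^2 ≤ ∑ _j : Fin n, (1:ℝ) :=
          Finset.sum_le_sum (fun j _ => by nlinarith [(hθ j).1, (hθ j).2])
      _ = n := by simp
  have hD : 0 < ((n:ℝ)+1)^2 * φ - ∑ j, (θ j)^2 := by nlinarith
  intro i
  have hθi : 0 < θ i := (hθ i).1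
  constructor
  · have hsplit : ∑ j ∈ Finset.univ.erase i, (θ j)^2
        = (∑ j, (θ j)^2) - (θ i)^2 := by
      rw [Finset.sum_erase_eq_sub (Finset.mem_univ i)]
    have hsum : ∑ j ∈ Finset.univ.erase i, θ j * e j
        = ((∑ j, (θ j)^2) - (θ i)^2) * ((α - cbar) / (((n:ℝ)+1)^2 * φ - ∑ j, (θ j)^2)) := by
      rw [← hsplit, Finset.sum_mul]
      exact Finset.sum_congr rfl (fun j _ => by rw [he j]; ring)
    rw [hsum, he i]
    field_simp
    ring
  · rw [he i]
    exact div_pos (mul_pos (by linarith) hθi) hD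
end

section
/- Let n ≥ 3, φ ≥ 1, θ_1 ∈ (0,1], and 0 < Q ≤ (n−2)/((n+1)²φ). Then the limit profit ratio as the partner's productivity vanishes, R₀ := [(n+1)²φ − 4θ_1²]/[(n+1)²φ − θ_1²] · {[(n+1)²φ(1−Q) − θ_1²]/[(n+1)²φ(1−Q) − 4θ_1²]}², satisfies R₀ > 1. -/
theorem stmt12 (n : ℕ) (hn : 3 ≤ n) (φ θ1 Q : ℝ) (hφ : 1 ≤ φ)
    (hθ1 : θ1 ∈ Set.Ioc (0:ℝ) 1)
    (hQ0 : 0 < Q) (hQ : Q ≤ ((n:ℝ)-2) / (((n:ℝ)+1)^2 * φ)) :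
    1 < ((((n:ℝ)+1)^2 * φ - 4 * θ1^2) / (((n:ℝ)+1)^2 * φ - θ1^2))
        * ((((n:ℝ)+1)^2 * φ * (1 - Q) - θ1^2)
            / (((n:ℝ)+1)^2 * φ * (1 - Q) - 4 * θ1^2))^2 := by
  obtain ⟨ht0, ht1⟩ := hθ1
  have hn3 : (3:ℝ) ≤ (n:ℝ) := by exact_mod_cast hn
  set A : ℝ := ((n:ℝ)+1)^2 * φ with hA
  set B : ℝ := A * (1 - Q) with hB
  have hApos : 0 < A := by positivity
  have hA16 : 16 ≤ A := by nlinarith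
  have hAQ : A * Q ≤ (n:ℝ) - 2 := by
    have h := mul_le_mul_of_nonneg_left hQ hApos.le
    rwa [mul_div_cancel₀ _ hApos.ne'] at h
  have hBge : A - ((n:ℝ) - 2) ≤ B := by rw [hB]; ring_nf; nlinarith
  have hB4 : 4 * θ1^2 < B := by nlinarith
  have hABgt : B < A := by rw [hB]; nlinarith
  have hB1 : θ1^2 < B := by nlinarith
  have hA4 : 4 * θ1^2 < A := by nlinarith
  have hA1 : θ1^2 < A := by nlinarith
  have key : (A - θ1^2) * (B - 4*θ1^2)^2 < (A - 4*θ1^2) * (B - θ1^2)^2 := by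
    nlinarith [mul_pos (sub_pos.mpr hB1) (sub_pos.mpr hB4), sq_nonneg θ1,
      mul_pos (sub_pos.mpr hABgt) (by nlinarith : (0:ℝ) < 2*B - 5*θ1^2),
      mul_pos ht0 ht0]
  have hden : 0 < (A - θ1^2) * (B - 4*θ1^2)^2 := mul_pos (sub_pos.mpr hA1) (pow_pos (sub_pos.mpr hB4) 2)
  rw [div_pow, div_mul_div_comm, lt_div_iff₀ hden, one_mul]
  calc (A - θ1^2) * (B - 4*θ1^2)^2 < (A - 4*θ1^2) * (B - θ1^2)^2 := key
    _ = (A - 4*θ1^2) * (B - θ1^2)^2 := rfl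
end

section
/- Let n ≥ 3, φ ≥ 1, θ_1 ∈ (0,1], and 0 ≤ Q ≤ (n−2)/((n+1)²φ). Then (n+1)(1−Q) > 3, and (n+1)²φ(1−Q) ≥ 2θ_1². Consequently the limit profit ratio as θ_2 → θ_1, R₁ := [(n+1)²φ − 4θ_1²]/[(n+1)²φ − θ_1²] · {[(n+1)²φ(1−Q) − 2θ_1²] / [(n+1)²φ(1−Q) − 2θ_1² + 2θ_1²((n+1)(1−Q) − 3)]}², satisfies R₁ < 1. -/
theorem stmt13 (n : ℕ) (hn : 3 ≤ n) (φ θ1 Q : ℝ) (hφ : 1 ≤ φ)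
    (hθ1 : θ1 ∈ Set.Ioc (0:ℝ) 1)
    (hQ : Q ∈ Set.Icc (0:ℝ) (((n:ℝ)-2) / (((n:ℝ)+1)^2 * φ))) :
    3 < ((n:ℝ)+1) * (1 - Q) ∧
    2 * θ1^2 ≤ ((n:ℝ)+1)^2 * φ * (1 - Q) ∧
    ((((n:ℝ)+1)^2 * φ - 4 * θ1^2) / (((n:ℝ)+1)^2 * φ - θ1^2))
        * ((((n:ℝ)+1)^2 * φ * (1 - Q) - 2 * θ1^2)
            / (((n:ℝ)+1)^2 * φ * (1 - Q) - 2 * θ1^2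
                + 2 * θ1^2 * (((n:ℝ)+1) * (1 - Q) - 3)))^2 < 1 := by
  obtain ⟨hθ0, hθu⟩ := hθ1
  obtain ⟨hQ0, hQ1⟩ := hQ
  have hn' : (3:ℝ) ≤ (n:ℝ) := by exact_mod_cast hn
  have hNpos : (0:ℝ) < ((n:ℝ)+1)^2 * φ := by positivity
  have hAQ : Q * (((n:ℝ)+1)^2 * φ) ≤ (n:ℝ) - 2 :=
    (le_div_iff₀ hNpos).mp hQ1
  have ht0 : 0 < θ1^2 := by positivity
  have ht1 : θ1^2 ≤ 1 := by nlinarith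
  have hA : (16:ℝ) ≤ ((n:ℝ)+1)^2 * φ := by nlinarith
  -- first claim
  have h1 : 3 < ((n:ℝ)+1) * (1 - Q) := by nlinarith [mul_nonneg hQ0 (by linarith : (0:ℝ) ≤ (n:ℝ)+1), sq_nonneg ((n:ℝ)+1), mul_nonneg (mul_nonneg hQ0 (by linarith : (0:ℝ) ≤ (n:ℝ)+1)) (by nlinarith : (0:ℝ) ≤ ((n:ℝ)+1)*φ - 1)]
  -- B strictly positive (stronger than second claim)
  have hB : 2 * θ1^2 < ((n:ℝ)+1)^2 * φ * (1 - Q) := by nlinarith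
  refine ⟨h1, le_of_lt hB, ?_⟩
  set a := ((n:ℝ)+1)^2 * φ with ha
  set t := θ1^2 with htdef
  set B := a * (1 - Q) - 2 * t with hBdef
  set C := 2 * t * (((n:ℝ)+1) * (1 - Q) - 3) with hCdef
  have hBpos : 0 < B := by simp [hBdef]; linarith
  have hCpos : 0 < C := by
    have : 0 < ((n:ℝ)+1) * (1 - Q) - 3 := by linarith
    positivity
  have hx0 : 0 < (a - 4*t) / (a - t) := by
    apply div_pos <;> linarith
  have hx1 : (a - 4*t) / (a - t) < 1 := by
    rw [div_lt_one (by linarith)]; linarith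
  have hy0 : 0 < B / (B + C) := by apply div_pos hBpos; linarith
  have hy1 : B / (B + C) < 1 := by
    rw [div_lt_one (by linarith)]; linarith
  have hy2 : (B / (B + C))^2 ≤ 1 := by nlinarith
  calc (a - 4*t) / (a - t) * (B / (B + C))^2
      ≤ (a - 4*t) / (a - t) * 1 := by
        apply mul_le_mul_of_nonneg_left hy2 (le_of_lt hx0)
    _ < 1 := by rw [mul_one]; exact hx1
end
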